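/- In a hyperbolic group G, every infinite cyclic subgroup C has finite index in its centralizer C_G(C) and in its normalizer N_G(C). In particular, a hyperbolic group contains no subgroup isomorphic to ℤⁿ for any n ≥ 2. -/

import Mathlib

/-!
Let `g` have infinite order. An element `h` normalizing `⟨g⟩` conjugates `g` to `g ^ (±1)`, so
`g` moves `h` exactly as far as it moves `1`; it suffices to show that all points moved that
little lie within a uniform distance `R` of the orbit `⟨g⟩`, since then every coset of `⟨g⟩` in
the normalizer has a representative in the finite ball of radius `R`.

Take such a point `x` far from the orbit and a closest orbit point `g ^ k`. Thin quadrilaterals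
make the displacement of `g` quasi-convex, so it stays bounded along a geodesic `γ` from `g ^ k`
to `x`; hence the conjugates of `g` by the points of `γ` range over a finite set of elements of
infinite order, and one power `g ^ j` moves every point of `γ` far while moving its endpoints a
bounded amount. A thin quadrilateral formed by `γ`, its translate `g ^ j γ` and two short sides
then shows that `g ^ (k + j)` or `g ^ (k - j)` is closer to `x` than `g ^ k`.

A subgroup `ℤⁿ`, `n ≥ 2`, would contain commuting `a`, `b` of infinite order with no positive
power of `b` in `⟨a⟩`, contradicting the finite index of `⟨a⟩` in its centralizer.
-/

/-- The word length of `g` with respect to a generating set `S`. -/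
noncomputable def wordLength {G : Type*} [Group G] (S : Set G) (g : G) : ℕ :=
  sInf {n : ℕ | ∃ w : List G, w.length = n ∧ (∀ x ∈ w, x ∈ S ∨ x⁻¹ ∈ S) ∧ w.prod = g}

/-- The word metric on `G` associated to a generating set `S`. -/
noncomputable def wordDist {G : Type*} [Group G] (S : Set G) (g h : G) : ℝ :=
  (wordLength S (g⁻¹ * h) : ℝ)

/-- A finitely generated group is hyperbolic if its word metric (equivalently, its Cayley
graph) with respect to some finite generating set satisfies Gromov's four-point
`δ`-hyperbolicity condition for some `δ ≥ 0`. -/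
def IsHyperbolicGroup (G : Type*) [Group G] : Prop :=
  ∃ S : Set G, S.Finite ∧ Subgroup.closure S = ⊤ ∧
    ∃ δ : ℝ, 0 ≤ δ ∧ ∀ x y z w : G,
      wordDist S x y + wordDist S z w ≤
        max (wordDist S x z + wordDist S y w) (wordDist S x w + wordDist S y z) + δ

variable {G : Type*} [Group G] {S : Set G} {δ : ℕ}

theorem wordLength_le_length {w : List G} (hw : ∀ x ∈ w, x ∈ S ∪ S⁻¹) :
    wordLength S w.prod ≤ w.length :=
  Nat.sInf_le ⟨w, rfl, hw, rfl⟩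

theorem exists_length_eq_wordLength (hS : Subgroup.closure S = ⊤) (g : G) :
    ∃ w : List G, (∀ x ∈ w, x ∈ S ∪ S⁻¹) ∧ w.prod = g ∧ w.length = wordLength S g := by
  have hg : g ∈ Submonoid.closure (S ∪ S⁻¹) := by
    rw [← Subgroup.closure_toSubmonoid, hS]; trivial
  obtain ⟨w, hw, rfl⟩ := Submonoid.exists_list_of_mem_closure hg
  obtain ⟨v, hv, hvw, hvw'⟩ := Nat.sInf_mem (s := {n | ∃ v : List G, v.length = n ∧
    (∀ x ∈ v, x ∈ S ∨ x⁻¹ ∈ S) ∧ v.prod = w.prod}) ⟨w.length, w, rfl, hw, rfl⟩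
  exact ⟨v, hvw, hvw', hv⟩

theorem wordLength_one : wordLength S (1 : G) = 0 :=
  Nat.le_zero.mp (wordLength_le_length (w := []) (by simp))

theorem wordLength_mul_le (hS : Subgroup.closure S = ⊤) (g h : G) :
    wordLength S (g * h) ≤ wordLength S g + wordLength S h := by
  obtain ⟨u, hu, rfl, hlu⟩ := exists_length_eq_wordLength hS g
  obtain ⟨v, hv, rfl, hlv⟩ := exists_length_eq_wordLength hS h
  rw [← hlu, ← hlv, ← List.length_append, ← List.prod_append]
  exact wordLength_le_length fun x hx => (List.mem_append.mp hx).elim (hu x) (hv x)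

theorem wordLength_inv_le (hS : Subgroup.closure S = ⊤) (g : G) :
    wordLength S g⁻¹ ≤ wordLength S g := by
  obtain ⟨w, hw, rfl, hlw⟩ := exists_length_eq_wordLength hS g
  rw [← hlw, List.prod_inv_reverse, ← List.length_map (f := (·⁻¹)), ← List.length_reverse]
  refine wordLength_le_length fun x hx => ?_
  obtain ⟨y, hy, rfl⟩ := List.mem_map.mp (List.mem_reverse.mp hx)
  simpa [or_comm] using hw y hy

theorem wordLength_inv (hS : Subgroup.closure S = ⊤) (g : G) :
    wordLength S g⁻¹ = wordLength S g :=
  (wordLength_inv_le hS g).antisymm (by simpa using wordLength_inv_le hS g⁻¹)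

theorem wordLength_pow_le (hS : Subgroup.closure S = ⊤) (g : G) (n : ℕ) :
    wordLength S (g ^ n) ≤ n * wordLength S g := by
  induction n with
  | zero => simp [wordLength_one]
  | succ n ih =>
    rw [pow_succ, Nat.succ_mul]
    exact (wordLength_mul_le hS _ _).trans (Nat.add_le_add_right ih _)

theorem finite_setOf_wordLength_le (hS : Subgroup.closure S = ⊤) (hfin : S.Finite) (n : ℕ) :
    {g : G | wordLength S g ≤ n}.Finite := by
  have : Finite ↥(S ∪ S⁻¹) := (hfin.union hfin.inv).to_subtype
  refine ((List.finite_length_le ↥(S ∪ S⁻¹) n).image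
    fun l => (l.map Subtype.val).prod).subset fun g hg => ?_
  obtain ⟨w, hw, rfl, hlw⟩ := exists_length_eq_wordLength hS g
  lift w to List ↥(S ∪ S⁻¹) using hw
  exact ⟨w, by simpa using hlw.trans_le hg, rfl⟩

noncomputable def natWordDist (S : Set G) (x y : G) : ℕ := wordLength S (x⁻¹ * y)

local notation "d" => natWordDist S

theorem natWordDist_mul_left (a x y : G) : d (a * x) (a * y) = d x y := by
  simp [natWordDist, mul_assoc]

theorem natWordDist_comm (hS : Subgroup.closure S = ⊤) (x y : G) : d x y = d y x := by
  rw [natWordDist, ← wordLength_inv hS, mul_inv_rev, inv_inv, natWordDist]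

theorem natWordDist_triangle (hS : Subgroup.closure S = ⊤) (x y z : G) :
    d x z ≤ d x y + d y z := by
  simpa [natWordDist, mul_assoc] using wordLength_mul_le hS (x⁻¹ * y) (y⁻¹ * z)

def FourPoint (S : Set G) (δ : ℕ) : Prop :=
  ∀ x y z w : G, natWordDist S x y + natWordDist S z w ≤
    max (natWordDist S x z + natWordDist S y w) (natWordDist S x w + natWordDist S y z) + δ

/-- A geodesic of the Cayley graph parametrised by arc length; only the values `γ i` with
`i ≤ d x y` matter. -/
structure IsGeodesic (S : Set G) (γ : ℕ → G) (x y : G) : Prop where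
  apply_zero : γ 0 = x
  apply_natWordDist : γ (natWordDist S x y) = y
  natWordDist_apply_apply {i j : ℕ} :
    i ≤ j → j ≤ natWordDist S x y → natWordDist S (γ i) (γ j) = j - i

theorem natWordDist_prod_take_le {w : List G} (hw : ∀ x ∈ w, x ∈ S ∪ S⁻¹) {i j : ℕ}
    (hij : i ≤ j) : d (w.take i).prod (w.take j).prod ≤ j - i := by
  have hsplit : (w.take i).prod * ((w.take j).drop i).prod = (w.take j).prod := by
    conv_rhs => rw [← List.take_append_drop i (w.take j), List.take_take, min_eq_left hij]
    rw [List.prod_append]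
  rw [natWordDist, ← hsplit, inv_mul_cancel_left]
  refine (wordLength_le_length fun x hx => hw x ?_).trans ?_
  · exact List.mem_of_mem_take (List.mem_of_mem_drop hx)
  · simp only [List.length_drop, List.length_take]; omega

theorem exists_isGeodesic (hS : Subgroup.closure S = ⊤) (x y : G) :
    ∃ γ : ℕ → G, IsGeodesic S γ x y := by
  obtain ⟨w, hw, hwp, hwl⟩ := exists_length_eq_wordLength hS (x⁻¹ * y)
  have hwl' : w.length = d x y := hwl
  have hend : x * (w.take (d x y)).prod = y := by
    rw [← hwl', List.take_length, hwp, mul_inv_cancel_left]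
  have hle : ∀ {i j}, i ≤ j → d (x * (w.take i).prod) (x * (w.take j).prod) ≤ j - i :=
    fun hij => (natWordDist_mul_left _ _ _).trans_le (natWordDist_prod_take_le hw hij)
  refine ⟨fun i => x * (w.take i).prod, by simp, hend, fun {i j} hij hj => ?_⟩
  have h0i := hle (Nat.zero_le i)
  have hjn := hle hj
  simp only [List.take_zero, List.prod_nil, mul_one, hend] at h0i hjn
  have := natWordDist_triangle hS x (x * (w.take i).prod) y
  have := natWordDist_triangle hS (x * (w.take i).prod) (x * (w.take j).prod) y
  have := hle hij
  omega

namespace IsGeodesic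

variable {γ : ℕ → G} {x y : G}

theorem mul_left (hγ : IsGeodesic S γ x y) (a : G) :
    IsGeodesic S (fun i => a * γ i) (a * x) (a * y) where
  apply_zero := by rw [hγ.apply_zero]
  apply_natWordDist := by rw [natWordDist_mul_left, hγ.apply_natWordDist]
  natWordDist_apply_apply hij hj := by
    rw [natWordDist_mul_left] at hj ⊢
    exact hγ.natWordDist_apply_apply hij hj

theorem natWordDist_start (hγ : IsGeodesic S γ x y) {i : ℕ} (hi : i ≤ d x y) :
    d x (γ i) = i := by
  simpa [hγ.apply_zero] using hγ.natWordDist_apply_apply (Nat.zero_le i) hi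

theorem natWordDist_finish (hγ : IsGeodesic S γ x y) {i : ℕ} (hi : i ≤ d x y) :
    d (γ i) y = d x y - i := by
  simpa [hγ.apply_natWordDist] using hγ.natWordDist_apply_apply hi le_rfl

theorem natWordDist_apply_apply_le (hS : Subgroup.closure S = ⊤) (hγ : IsGeodesic S γ x y)
    {i j : ℕ} (hi : i ≤ d x y) (hj : j ≤ d x y) : d (γ i) (γ j) ≤ i - j + (j - i) := by
  rcases le_total i j with hij | hij
  · rw [hγ.natWordDist_apply_apply hij hj]; omega
  · rw [natWordDist_comm hS, hγ.natWordDist_apply_apply hij hi]; omega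

theorem exists_near (hS : Subgroup.closure S = ⊤) (hδ : FourPoint S δ)
    (hγ : IsGeodesic S γ x y) (p : G) :
    ∃ j ≤ d x y, 2 * d p (γ j) + d x y ≤ d p x + d p y + 2 * δ + 1 := by
  have := natWordDist_triangle hS x y p
  have := natWordDist_triangle hS p x y
  have := natWordDist_comm hS x p
  have := natWordDist_comm hS y p
  -- `j` is the Gromov product `(p · y)ₓ`, rounded up
  obtain ⟨j, hjp⟩ : ∃ j, d x p + d x y ≤ 2 * j + d p y ∧ 2 * j + d p y ≤ d x p + d x y + 1 :=
    ⟨(d x p + d x y - d p y + 1) / 2, by omega⟩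
  have hj : j ≤ d x y := by omega
  have := hγ.natWordDist_start hj
  have := hγ.natWordDist_finish hj
  have := natWordDist_comm hS x (γ j)
  have := hδ p (γ j) x y
  exact ⟨j, hj, by omega⟩

theorem exists_near_of_triangle (hS : Subgroup.closure S = ⊤) (hδ : FourPoint S δ)
    {z : G} {β ρ : ℕ → G} (hγ : IsGeodesic S γ x y) (hβ : IsGeodesic S β x z)
    (hρ : IsGeodesic S ρ z y) {i : ℕ} (hi : i ≤ d x y) :
    (∃ j ≤ d x z, d (γ i) (β j) ≤ 2 * δ + 1) ∨ ∃ j ≤ d z y, d (γ i) (ρ j) ≤ 2 * δ + 1 := by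
  obtain ⟨j, hj, hβj⟩ := hβ.exists_near hS hδ (γ i)
  obtain ⟨k, hk, hρk⟩ := hρ.exists_near hS hδ (γ i)
  have := hγ.natWordDist_start hi
  have := hγ.natWordDist_finish hi
  have := natWordDist_comm hS x (γ i)
  have := natWordDist_comm hS z x
  have := hδ (γ i) z x y
  have : d (γ i) (β j) ≤ 2 * δ + 1 ∨ d (γ i) (ρ k) ≤ 2 * δ + 1 := by omega
  exact this.imp (fun h => ⟨j, hj, h⟩) (fun h => ⟨k, hk, h⟩)

theorem exists_near_of_quadrilateral (hS : Subgroup.closure S = ⊤)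
    (hδ : FourPoint S δ) {z₁ z₂ : G} {β₁ β₂ β₃ : ℕ → G} (hγ : IsGeodesic S γ x y)
    (hβ₁ : IsGeodesic S β₁ x z₁) (hβ₂ : IsGeodesic S β₂ z₁ z₂) (hβ₃ : IsGeodesic S β₃ z₂ y)
    {i : ℕ} (hi : i ≤ d x y) :
    (∃ j ≤ d x z₁, d (γ i) (β₁ j) ≤ 4 * δ + 2) ∨ (∃ j ≤ d z₁ z₂, d (γ i) (β₂ j) ≤ 4 * δ + 2) ∨
      ∃ j ≤ d z₂ y, d (γ i) (β₃ j) ≤ 4 * δ + 2 := by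
  obtain ⟨α, hα⟩ := exists_isGeodesic hS x z₂
  rcases hγ.exists_near_of_triangle hS hδ hα hβ₃ hi with ⟨j, hj, hαj⟩ | ⟨k, hk, hβ₃k⟩
  · rcases hα.exists_near_of_triangle hS hδ hβ₁ hβ₂ hj with ⟨k, hk, hk'⟩ | ⟨k, hk, hk'⟩
    · have := natWordDist_triangle hS (γ i) (α j) (β₁ k)
      exact Or.inl ⟨k, hk, by omega⟩
    · have := natWordDist_triangle hS (γ i) (α j) (β₂ k)
      exact Or.inr (Or.inl ⟨k, hk, by omega⟩)
  · exact Or.inr (Or.inr ⟨k, hk, by omega⟩)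

/-- Quasi-convexity of the displacement of `v`. -/
theorem natWordDist_mul_apply_le (hS : Subgroup.closure S = ⊤) (hδ : FourPoint S δ)
    (hγ : IsGeodesic S γ x y) (v : G) {i : ℕ} (hi : i ≤ d x y) :
    d (γ i) (v * γ i) ≤ max (d x (v * x)) (d y (v * y)) + 2 * (4 * δ + 2) := by
  obtain ⟨β₁, hβ₁⟩ := exists_isGeodesic hS x (v * x)
  obtain ⟨β₃, hβ₃⟩ := exists_isGeodesic hS (v * y) y
  have hxp := hγ.natWordDist_start hi
  have hpy := hγ.natWordDist_finish hi
  rcases hγ.exists_near_of_quadrilateral hS hδ hβ₁ (hγ.mul_left v) hβ₃ hi with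
    ⟨j, hj, hq⟩ | ⟨j, hj, hq⟩ | ⟨j, hj, hq⟩
  · have := hβ₁.natWordDist_finish hj
    have := natWordDist_triangle hS (γ i) (β₁ j) (v * x)
    have := natWordDist_triangle hS (γ i) (v * x) (v * γ i)
    have := natWordDist_triangle hS x (β₁ j) (γ i)
    have := hβ₁.natWordDist_start hj
    have := natWordDist_comm hS (β₁ j) (γ i)
    have : d (v * x) (v * γ i) = d x (γ i) := natWordDist_mul_left v x (γ i)
    omega
  · rw [natWordDist_mul_left] at hj
    have := hγ.natWordDist_apply_apply_le hS hj hi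
    have := natWordDist_triangle hS (γ i) (v * γ j) (v * γ i)
    have := natWordDist_triangle hS x (v * x) (v * γ j)
    have := natWordDist_triangle hS x (v * γ j) (γ i)
    have := natWordDist_triangle hS (v * x) x (γ i)
    have := natWordDist_triangle hS (v * x) (γ i) (v * γ j)
    have := natWordDist_comm hS (v * x) x
    have := natWordDist_comm hS (v * γ j) (γ i)
    have := hγ.natWordDist_start hj
    have : d (v * γ j) (v * γ i) = d (γ j) (γ i) := natWordDist_mul_left v (γ j) (γ i)
    have : d (v * x) (v * γ j) = d x (γ j) := natWordDist_mul_left v x (γ j)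
    omega
  · have := hβ₃.natWordDist_start hj
    have := hβ₃.natWordDist_finish hj
    have := natWordDist_triangle hS (γ i) (β₃ j) (v * y)
    have := natWordDist_triangle hS (γ i) (v * y) (v * γ i)
    have := natWordDist_triangle hS (γ i) (β₃ j) y
    have := natWordDist_comm hS (β₃ j) (v * y)
    have := natWordDist_comm hS y (γ i)
    have := natWordDist_comm hS (v * y) y
    have : d (v * y) (v * γ i) = d y (γ i) := natWordDist_mul_left v y (γ i)
    omega

theorem natWordDist_mul_lt_or_natWordDist_inv_mul_lt (hS : Subgroup.closure S = ⊤)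
    (hδ : FourPoint S δ) (hγ : IsGeodesic S γ y x) {w : G} {B : ℕ}
    (hlong : 2 * (B + 4 * δ + 3) ≤ d y x) (hy : d y (w * y) ≤ B) (hx : d x (w * x) ≤ B)
    (hγw : ∀ i ≤ d y x, 2 * (4 * δ + 2) < d (γ i) (w * γ i)) :
    d (w * y) x < d y x ∨ d (w⁻¹ * y) x < d y x := by
  obtain ⟨β₁, hβ₁⟩ := exists_isGeodesic hS (w * y) y
  obtain ⟨β₃, hβ₃⟩ := exists_isGeodesic hS x (w * x)
  -- the point `w * γ t` is too far from the short sides `[w y, y]` and `[x, w x]`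
  obtain ⟨t, ht_eq⟩ : ∃ t, t = B + 4 * δ + 3 := ⟨_, rfl⟩
  have hwyx : d (w * y) (w * x) = d y x := natWordDist_mul_left w y x
  have ht : t ≤ d (w * y) (w * x) := by omega
  have : d (w * y) (w * γ t) = t := (hγ.mul_left w).natWordDist_start ht
  have : d (w * γ t) (w * x) = d (w * y) (w * x) - t := (hγ.mul_left w).natWordDist_finish ht
  have := natWordDist_comm hS (w * y) y
  rcases (hγ.mul_left w).exists_near_of_quadrilateral hS hδ hβ₁ hγ hβ₃ ht with
    ⟨j, hj, hq⟩ | ⟨s, hs, hq⟩ | ⟨j, hj, hq⟩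
  · have := hβ₁.natWordDist_start hj
    have := natWordDist_triangle hS (w * y) (β₁ j) (w * γ t)
    have := natWordDist_comm hS (β₁ j) (w * γ t)
    omega
  · have := hγw t (by omega)
    have := natWordDist_triangle hS (γ t) (γ s) (w * γ t)
    have := natWordDist_comm hS (γ s) (w * γ t)
    have := hγ.natWordDist_apply_apply_le hS (i := t) (by omega) hs
    have := hγ.natWordDist_start hs
    have := hγ.natWordDist_finish hs
    have := natWordDist_triangle hS (w * y) (w * γ t) x
    have := natWordDist_triangle hS (w * γ t) (γ s) x
    have := natWordDist_triangle hS y (γ s) (w * x)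
    have := natWordDist_triangle hS (γ s) (w * γ t) (w * x)
    have : d (w * (w⁻¹ * y)) (w * x) = d (w⁻¹ * y) x := natWordDist_mul_left w _ x
    rw [mul_inv_cancel_left] at this
    omega
  · have := hβ₃.natWordDist_finish hj
    have := natWordDist_triangle hS (w * γ t) (β₃ j) (w * x)
    omega

end IsGeodesic

theorem exists_forall_lt_wordLength_pow (hS : Subgroup.closure S = ⊤) (hfin : S.Finite)
    {V : Set G} (hV : V.Finite) (hVo : ∀ v ∈ V, ¬IsOfFinOrder v) (A : ℕ) :
    ∃ j : ℕ, ∀ v ∈ V, A < wordLength S (v ^ j) := by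
  have hshort : (⋃ v ∈ V, {j : ℕ | wordLength S (v ^ j) ≤ A}).Finite :=
    hV.biUnion fun v hv => (finite_setOf_wordLength_le hS hfin A).preimage
      (injective_pow_iff_not_isOfFinOrder.mpr (hVo v hv)).injOn
  obtain ⟨j, hj⟩ := hshort.exists_notMem
  exact ⟨j, fun v hv => not_le.mp fun h => hj (Set.mem_biUnion hv h)⟩

theorem natWordDist_pow_mul (x v : G) (n : ℕ) :
    d x (v ^ n * x) = wordLength S ((x⁻¹ * v * x) ^ n) := by
  have := conj_pow (a := x⁻¹) (b := v) (i := n)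
  rw [inv_inv] at this
  rw [natWordDist, ← mul_assoc, this]

theorem exists_natWordDist_zpow_le (hS : Subgroup.closure S = ⊤) (hfin : S.Finite)
    (hδ : FourPoint S δ) {g : G} (hg : ¬IsOfFinOrder g) :
    ∃ R, ∀ x, d x (g * x) ≤ wordLength S g → ∃ k : ℤ, d (g ^ k) x ≤ R := by
  -- by quasi-convexity, `g` moves the points of a geodesic between two points that it moves at
  -- most as far as `1` by at most `T`, so its conjugates by these points lie in a finite set
  obtain ⟨T, hT⟩ : ∃ T, T = wordLength S g + 2 * (4 * δ + 2) := ⟨_, rfl⟩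
  have hV : {v | wordLength S v ≤ T ∧ IsConj g v}.Finite :=
    (finite_setOf_wordLength_le hS hfin T).subset fun v hv => hv.1
  obtain ⟨j, hj⟩ := exists_forall_lt_wordLength_pow hS hfin hV
    (fun v hv hv' => hg (hv.2.symm.isOfFinOrder hv')) (2 * (4 * δ + 2))
  refine ⟨2 * (j * T + 4 * δ + 3), fun x hx => ?_⟩
  by_contra! hfar
  set k₀ := Function.argmin fun k : ℤ => d (g ^ k) x
  have hmin : ∀ k : ℤ, d (g ^ k₀) x ≤ d (g ^ k) x := fun k =>
    Function.argmin_le (fun k : ℤ => d (g ^ k) x) k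
  obtain ⟨γ, hγ⟩ := exists_isGeodesic hS (g ^ k₀) x
  have hgj : ∀ i ≤ d (g ^ k₀) x,
      2 * (4 * δ + 2) < d (γ i) (g ^ j * γ i) ∧ d (γ i) (g ^ j * γ i) ≤ j * T := by
    intro i hi
    have hstart : d (g ^ k₀) (g * g ^ k₀) = wordLength S g := by
      rw [natWordDist, ← mul_assoc, ((Commute.refl g).zpow_left k₀).inv_left.eq,
        inv_mul_cancel_right]
    have hγi := hγ.natWordDist_mul_apply_le hS hδ g hi
    rw [natWordDist_pow_mul]
    rw [natWordDist, ← mul_assoc] at hγi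
    refine ⟨hj _ ⟨by omega, isConj_iff.mpr ⟨(γ i)⁻¹, by group⟩⟩, ?_⟩
    exact (wordLength_pow_le hS _ j).trans (Nat.mul_le_mul_left j (by omega))
  have hnear := hγ.natWordDist_mul_lt_or_natWordDist_inv_mul_lt hS hδ (hfar k₀).le
    (by simpa [hγ.apply_zero] using (hgj 0 (Nat.zero_le _)).2)
    (by simpa [hγ.apply_natWordDist] using (hgj _ le_rfl).2) fun i hi => (hgj i hi).1
  rw [← zpow_natCast, ← zpow_neg, ← zpow_add, ← zpow_add] at hnear
  exact hnear.elim (hmin _).not_gt (hmin _).not_gt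

theorem relIndex_zpowers_ne_zero (hS : Subgroup.closure S = ⊤) (hfin : S.Finite)
    (hδ : FourPoint S δ) {g : G} (hg : ¬IsOfFinOrder g) {K : Subgroup G} (hgK : g ∈ K)
    (hK : ∀ h ∈ K, d h (g * h) ≤ wordLength S g) : (Subgroup.zpowers g).relIndex K ≠ 0 := by
  obtain ⟨R, hR⟩ := exists_natWordDist_zpow_le hS hfin hδ hg
  have : Finite ↥({h | wordLength S h ≤ R} ∩ K) :=
    ((finite_setOf_wordLength_le hS hfin R).inter_of_left _).to_subtype
  -- every coset of `⟨g⟩` in `K` has a representative of word length at most `R`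
  have : Finite (K ⧸ (Subgroup.zpowers g).subgroupOf K) := by
    refine Finite.of_surjective (fun h : ↥({h | wordLength S h ≤ R} ∩ K) =>
      (QuotientGroup.mk ⟨h, h.2.2⟩ : K ⧸ (Subgroup.zpowers g).subgroupOf K)) ?_
    rintro ⟨⟨h, hhK⟩⟩
    obtain ⟨k, hk⟩ := hR h⁻¹ (hK _ (inv_mem hhK))
    rw [natWordDist, ← mul_inv_rev, wordLength_inv hS] at hk
    refine ⟨⟨h * g ^ k, hk, mul_mem hhK (zpow_mem hgK k)⟩, QuotientGroup.eq.mpr ?_⟩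
    simp [Subgroup.mem_subgroupOf]
  exact Subgroup.index_ne_zero_of_finite

theorem conj_eq_or_eq_inv_of_mem_normalizer_zpowers {g h : G} (hg : ¬IsOfFinOrder g)
    (hh : h ∈ Subgroup.normalizer (Subgroup.zpowers g : Set G)) :
    h⁻¹ * g * h = g ∨ h⁻¹ * g * h = g⁻¹ := by
  obtain ⟨m, hm⟩ := Subgroup.mem_zpowers_iff.mp
    ((Subgroup.mem_normalizer_iff''.mp hh g).mp (Subgroup.mem_zpowers g))
  obtain ⟨m', hm'⟩ := Subgroup.mem_zpowers_iff.mp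
    ((Subgroup.mem_normalizer_iff.mp hh g).mp (Subgroup.mem_zpowers g))
  have hmm' : g ^ (m' * m) = g ^ (1 : ℤ) := by
    rw [zpow_mul, hm', conj_zpow, hm]
    group
  rcases Int.eq_one_or_neg_one_of_mul_eq_one' (injective_zpow_iff_not_isOfFinOrder.mpr hg hmm')
    with ⟨-, rfl⟩ | ⟨-, rfl⟩
  · exact Or.inl (by rw [← hm, zpow_one])
  · exact Or.inr (by rw [← hm, zpow_neg_one])

theorem relIndex_zpowers_normalizer_ne_zero (hS : Subgroup.closure S = ⊤) (hfin : S.Finite)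
    (hδ : FourPoint S δ) {g : G} (hg : ¬IsOfFinOrder g) :
    (Subgroup.zpowers g).relIndex (Subgroup.normalizer (Subgroup.zpowers g : Set G)) ≠ 0 := by
  refine relIndex_zpowers_ne_zero hS hfin hδ hg (Subgroup.le_normalizer (Subgroup.mem_zpowers g))
    fun h hh => ?_
  rw [natWordDist, ← mul_assoc]
  rcases conj_eq_or_eq_inv_of_mem_normalizer_zpowers hg hh with h' | h' <;>
    simp [h', wordLength_inv hS]

theorem relIndex_zpowers_centralizer_ne_zero (hS : Subgroup.closure S = ⊤) (hfin : S.Finite)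
    (hδ : FourPoint S δ) {g : G} (hg : ¬IsOfFinOrder g) :
    (Subgroup.zpowers g).relIndex (Subgroup.centralizer (Subgroup.zpowers g : Set G)) ≠ 0 :=
  mt (Subgroup.relIndex_eq_zero_of_le_right (Subgroup.centralizer_le_normalizer _))
    (relIndex_zpowers_normalizer_ne_zero hS hfin hδ hg)

theorem not_nonempty_mulEquiv_multiplicative_pi_int
    (hC : ∀ g : G, ¬IsOfFinOrder g →
      (Subgroup.zpowers g).relIndex (Subgroup.centralizer (Subgroup.zpowers g : Set G)) ≠ 0)
    {n : ℕ} (hn : 2 ≤ n) (H : Subgroup G) : ¬Nonempty (H ≃* Multiplicative (Fin n → ℤ)) := by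
  rintro ⟨φ⟩
  obtain ⟨i₀, i₁, hi⟩ : ∃ i₀ i₁ : Fin n, i₀ ≠ i₁ := ⟨⟨0, by omega⟩, ⟨1, by omega⟩, by simp⟩
  set ψ : Multiplicative (Fin n → ℤ) →* G := H.subtype.comp φ.symm.toMonoidHom
  have hψ : Function.Injective ψ := H.subtype_injective.comp φ.symm.injective
  set e : Fin n → Multiplicative (Fin n → ℤ) := fun i => .ofAdd (Pi.single i 1)
  have he : ∀ i (k : ℤ), (e i ^ k).toAdd = Pi.single i k := fun i k => by
    simp [e, ← Pi.single_smul]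
  have ha : ¬IsOfFinOrder (ψ (e i₀)) := by
    refine injective_zpow_iff_not_isOfFinOrder.mp fun k l hkl => ?_
    have := congrArg (fun x => x.toAdd i₀) (hψ (by simpa only [← map_zpow] using hkl))
    rwa [he, he, Pi.single_eq_same, Pi.single_eq_same] at this
  have hb : ψ (e i₁) ∈ Subgroup.centralizer (Subgroup.zpowers (ψ (e i₀)) : Set G) := by
    rw [Subgroup.mem_centralizer_iff]
    rintro _ ⟨k, rfl⟩
    exact ((Commute.all _ _).map ψ |>.zpow_right k).eq.symm
  obtain ⟨m, hm, -, hbm⟩ := Subgroup.exists_pow_mem_of_relIndex_ne_zero (hC _ ha) hb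
  obtain ⟨k, hk⟩ := Subgroup.mem_zpowers_iff.mp hbm.1
  rw [← zpow_natCast, ← map_zpow ψ, ← map_zpow ψ] at hk
  have := congrArg (fun x => x.toAdd i₁) (hψ hk)
  rw [he, he, Pi.single_eq_of_ne hi.symm, Pi.single_eq_same] at this
  omega

theorem IsHyperbolicGroup.exists_fourPoint (hG : IsHyperbolicGroup G) :
    ∃ S : Set G, S.Finite ∧ Subgroup.closure S = ⊤ ∧ ∃ δ : ℕ, FourPoint S δ := by
  obtain ⟨S, hfin, hS, δ, -, h⟩ := hG
  refine ⟨S, hfin, hS, ⌈δ⌉₊, fun x y z w => ?_⟩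
  have := (h x y z w).trans (add_le_add_right (Nat.le_ceil δ) _)
  simp only [wordDist] at this
  exact_mod_cast this

/-- In a hyperbolic group every infinite cyclic subgroup has finite index in its
centralizer and in its normalizer; in particular there is no subgroup isomorphic to `ℤⁿ`
for `n ≥ 2`. -/
theorem hyperbolic_cyclic_subgroups (G : Type) [Group G] (hG : IsHyperbolicGroup G) :
    (∀ g : G, Infinite (Subgroup.zpowers g) →
      (Subgroup.zpowers g).relIndex (Subgroup.centralizer (Subgroup.zpowers g : Set G)) ≠ 0 ∧
      (Subgroup.zpowers g).relIndex (Subgroup.normalizer (Subgroup.zpowers g : Set G)) ≠ 0) ∧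
    ∀ n : ℕ, 2 ≤ n → ∀ H : Subgroup G, ¬ Nonempty (H ≃* Multiplicative (Fin n → ℤ)) := by
  obtain ⟨S, hfin, hS, δ, hδ⟩ := hG.exists_fourPoint
  refine ⟨fun g hg => ?_, fun n hn H => ?_⟩
  · have hg' : ¬IsOfFinOrder g := infinite_zpowers.mp (Set.infinite_coe_iff.mp hg)
    exact ⟨relIndex_zpowers_centralizer_ne_zero hS hfin hδ hg',
      relIndex_zpowers_normalizer_ne_zero hS hfin hδ hg'⟩
  · exact not_nonempty_mulEquiv_multiplicative_pi_int
      (fun g => relIndex_zpowers_centralizer_ne_zero hS hfin hδ) hn H
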